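/- Fix 0 < p ≤ 1, let n ≥ 1, let A ⊆ C_n be a nonempty subset, let ε > 0, and let k = ⌈64n/ε²⌉. Let (x_1, l_1), ..., (x_k, l_k) be independent random pairs, where each x_i is uniform on C_n and each l_i ∈ {0,1}^n has independent Bernoulli(p) coordinates, with all x_i and l_i mutually independent. Let α = (1/k) Σ_{i=1}^k d_{l_i}(x_i, A). Then with probability at least 0.9 one has |Δ(A,p) − α| ≤ ε. -/

import Mathlib

/-- The randomized Hamming distance `d_l(x,y) = Σ_{i : x i ≠ y i} l i`, where the coordinates
with `l i = 1` are the ones that are counted. -/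
def dl {ι : Type*} [Fintype ι] (l x y : ι → Bool) : ℕ :=
  (Finset.univ.filter fun i => x i ≠ y i ∧ l i = true).card

/-- The randomized Hamming distance from a point `x` to a subset `A`:
`d_l(x,A) = min_{y ∈ A} d_l(x,y)`. -/
noncomputable def dlToSet {ι : Type*} [Fintype ι] (l x : ι → Bool) (A : Set (ι → Bool)) : ℕ :=
  sInf ((fun y => dl l x y) '' A)

/-- The probability `p^{|l|}(1-p)^{n-|l|}` of the vector `l` of `n` independent
Bernoulli(p) coordinates. -/
noncomputable def bernWeight {ι : Type*} [Fintype ι] (p : ℝ) (l : ι → Bool) : ℝ :=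
  p ^ (Finset.univ.filter fun i => l i = true).card *
    (1 - p) ^ (Finset.univ.filter fun i => l i = false).card

/-- `Δ(A,p)`: the expectation of `d_l(x,A)` when `x` is uniform on the cube and `l` has
independent Bernoulli(p) coordinates. -/
noncomputable def avgDistP {ι : Type*} [Fintype ι] [DecidableEq ι] (p : ℝ)
    (A : Set (ι → Bool)) : ℝ :=
  ∑ l : ι → Bool, ∑ x : ι → Bool,
    (bernWeight p l / 2 ^ Fintype.card ι) * (dlToSet l x A : ℝ)

/-!
The empirical mean of `k` independent samples of `Z(x, l) = d_l(x, A)` has variance `Var Z / k`,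
so by Chebyshev it misses `Δ(A, p)` by more than `ε` with probability at most `Var Z / (k ε²)`.
Changing one coordinate pair `(x i, l i)` moves `d_l(x, A)` by at most one, so the Efron–Stein
inequality, obtained by peeling off one coordinate at a time with the law of total variance,
gives `Var Z ≤ n / 4`. As `k ε² ≥ 64 n`, the failure probability is at most `1 / 256`.
-/

open Finset Function

section WeightedMean

variable {Ω : Type*} [Fintype Ω]

def wmean (π f : Ω → ℝ) : ℝ := ∑ a, π a * f a

def wvar (π f : Ω → ℝ) : ℝ := wmean π fun a => (f a - wmean π f) ^ 2

structure IsProbWeight (π : Ω → ℝ) : Prop where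
  nonneg : ∀ a, 0 ≤ π a
  sum_eq_one : ∑ a, π a = 1

variable {π : Ω → ℝ}

lemma wmean_add (π f g : Ω → ℝ) : wmean π (fun a => f a + g a) = wmean π f + wmean π g := by
  simp only [wmean, mul_add, sum_add_distrib]

lemma wmean_sub (π f g : Ω → ℝ) : wmean π (fun a => f a - g a) = wmean π f - wmean π g := by
  simp only [wmean, mul_sub, sum_sub_distrib]

lemma wmean_const_mul (π f : Ω → ℝ) (c : ℝ) :
    wmean π (fun a => c * f a) = c * wmean π f := by
  simp only [wmean, mul_sum, mul_left_comm]

lemma wmean_const (hπ : ∑ a, π a = 1) (c : ℝ) : wmean π (fun _ => c) = c := by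
  simp only [wmean, ← sum_mul, hπ, one_mul]

lemma wmean_add_const (hπ : ∑ a, π a = 1) (f : Ω → ℝ) (c : ℝ) :
    wmean π (fun a => f a + c) = wmean π f + c := by
  rw [wmean_add, wmean_const hπ]

lemma wmean_le_of_le (hπ : IsProbWeight π) {f : Ω → ℝ} {C : ℝ} (hf : ∀ a, f a ≤ C) :
    wmean π f ≤ C := by
  calc wmean π f ≤ wmean π fun _ => C :=
        sum_le_sum fun a _ => mul_le_mul_of_nonneg_left (hf a) (hπ.nonneg a)
    _ = C := wmean_const hπ.sum_eq_one C

lemma abs_wmean_sub_le (hπ : IsProbWeight π) {f g : Ω → ℝ} {C : ℝ}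
    (hfg : ∀ a, |f a - g a| ≤ C) : |wmean π f - wmean π g| ≤ C := by
  have hle : ∀ {f g : Ω → ℝ}, (∀ a, |f a - g a| ≤ C) → wmean π f - wmean π g ≤ C :=
    fun hfg => wmean_sub π _ _ ▸ wmean_le_of_le hπ fun a => (abs_le.1 (hfg a)).2
  exact abs_sub_le_iff.2 ⟨hle hfg, hle fun a => abs_sub_comm (g a) (f a) ▸ hfg a⟩

lemma wvar_eq_wmean_sq_sub (hπ : ∑ a, π a = 1) (f : Ω → ℝ) :
    wvar π f = wmean π (fun a => f a ^ 2) - wmean π f ^ 2 := by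
  have h : ∀ a, (f a - wmean π f) ^ 2 = f a ^ 2 + (-2 * wmean π f) * f a + wmean π f ^ 2 :=
    fun a => by ring
  simp only [wvar, h, wmean_add_const hπ, wmean_add, wmean_const_mul]
  ring

lemma wvar_le_wmean_sq_sub (hπ : ∑ a, π a = 1) (f : Ω → ℝ) (c : ℝ) :
    wvar π f ≤ wmean π (fun a => (f a - c) ^ 2) := by
  have h : ∀ a, (f a - c) ^ 2 = f a ^ 2 + (-2 * c) * f a + c ^ 2 := fun a => by ring
  simp only [wvar_eq_wmean_sq_sub hπ, h, wmean_add_const hπ, wmean_add, wmean_const_mul]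
  nlinarith [sq_nonneg (wmean π f - c)]

lemma wvar_const_mul (hπ : ∑ a, π a = 1) (f : Ω → ℝ) (c : ℝ) :
    wvar π (fun a => c * f a) = c ^ 2 * wvar π f := by
  simp only [wvar_eq_wmean_sq_sub hπ, mul_pow, wmean_const_mul]
  ring

lemma wvar_add_const (hπ : ∑ a, π a = 1) (f : Ω → ℝ) (c : ℝ) :
    wvar π (fun a => f a + c) = wvar π f := by
  simp only [wvar, wmean_add_const hπ, add_sub_add_right_eq_sub]

/-- Popoviciu's inequality. -/
lemma wvar_le_of_abs_sub_le (hπ : IsProbWeight π) {f : Ω → ℝ} {D : ℝ}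
    (hf : ∀ a b, |f a - f b| ≤ D) : wvar π f ≤ D ^ 2 / 4 := by
  have : Nonempty Ω := by
    by_contra h
    simpa [not_nonempty_iff.1 h] using hπ.sum_eq_one
  obtain ⟨a₀, ha₀⟩ := Finite.exists_min f
  -- `f` takes values in `[f a₀, f a₀ + D]`; compare with the midpoint of that interval.
  refine (wvar_le_wmean_sq_sub hπ.sum_eq_one f (f a₀ + D / 2)).trans
    (wmean_le_of_le hπ fun a => ?_)
  have hlow := ha₀ a
  have hup := (abs_le.1 (hf a a₀)).2
  nlinarith

lemma chebyshev_wvar (hπ : IsProbWeight π) (f : Ω → ℝ) {ε : ℝ} (hε : 0 < ε) :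
    1 - wvar π f / ε ^ 2 ≤ ∑ a, if |wmean π f - f a| ≤ ε then π a else 0 := by
  have h : ∀ a, π a ≤ (if |wmean π f - f a| ≤ ε then π a else 0)
      + π a * (f a - wmean π f) ^ 2 / ε ^ 2 := by
    intro a
    split_ifs with ha
    · have := hπ.nonneg a
      have : 0 ≤ π a * (f a - wmean π f) ^ 2 / ε ^ 2 := by positivity
      linarith
    · rw [zero_add, le_div_iff₀ (by positivity)]
      have : ε ^ 2 ≤ (f a - wmean π f) ^ 2 := by
        rw [← sq_abs (f a - _), abs_sub_comm]
        exact pow_le_pow_left₀ hε.le (not_le.1 ha).le 2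
      exact mul_le_mul_of_nonneg_left this (hπ.nonneg a)
  have := sum_le_sum fun a (_ : a ∈ univ) => h a
  rw [hπ.sum_eq_one, sum_add_distrib, ← sum_div] at this
  rw [wvar, wmean]
  linarith

end WeightedMean

section Product

variable {Ω₁ Ω₂ : Type*} [Fintype Ω₁] [Fintype Ω₂]

lemma wmean_prod (π₁ : Ω₁ → ℝ) (π₂ : Ω₂ → ℝ) (F : Ω₁ × Ω₂ → ℝ) :
    wmean (fun z => π₁ z.1 * π₂ z.2) F = wmean π₂ fun η => wmean π₁ fun a => F (a, η) := by
  simp only [wmean, Fintype.sum_prod_type, mul_sum]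
  rw [sum_comm]
  exact sum_congr rfl fun η _ => sum_congr rfl fun a _ => by ring

/-- The law of total variance. -/
lemma wvar_prod {π₁ : Ω₁ → ℝ} {π₂ : Ω₂ → ℝ} (h₁ : ∑ a, π₁ a = 1) (h₂ : ∑ b, π₂ b = 1) (F : Ω₁ × Ω₂ → ℝ) :
    wvar (fun z => π₁ z.1 * π₂ z.2) F =
      wmean π₂ (fun η => wvar π₁ fun a => F (a, η)) +
        wvar π₂ (fun η => wmean π₁ fun a => F (a, η)) := by
  have h : ∑ z : Ω₁ × Ω₂, π₁ z.1 * π₂ z.2 = 1 := by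
    rw [Fintype.sum_prod_type, ← Fintype.sum_mul_sum, h₁, h₂, one_mul]
  simp only [wvar_eq_wmean_sq_sub h, wvar_eq_wmean_sq_sub h₁, wvar_eq_wmean_sq_sub h₂,
    wmean_prod, wmean_sub]
  ring

variable {Ω Ω' : Type*} [Fintype Ω] [Fintype Ω']

lemma wmean_comp_equiv (e : Ω' ≃ Ω) (π f : Ω → ℝ) : wmean (π ∘ e) (f ∘ e) = wmean π f :=
  e.sum_comp fun a => π a * f a

lemma wvar_comp_equiv (e : Ω' ≃ Ω) (π f : Ω → ℝ) : wvar (π ∘ e) (f ∘ e) = wvar π f := by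
  simp only [wvar]
  rw [wmean_comp_equiv]
  exact wmean_comp_equiv e π fun a => (f a - wmean π f) ^ 2

lemma IsProbWeight.comp_equiv {π : Ω → ℝ} (hπ : IsProbWeight π) (e : Ω' ≃ Ω) :
    IsProbWeight (π ∘ e) where
  nonneg a := hπ.nonneg (e a)
  sum_eq_one := (e.sum_comp π).trans hπ.sum_eq_one

end Product

section PiWeight

variable {α ι : Type*} [Fintype ι] {π : α → ℝ}

def piWeight (π : α → ℝ) (ω : ι → α) : ℝ := ∏ i, π (ω i)

variable {m : ℕ}

lemma piWeight_cons (a : α) (η : Fin m → α) :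
    piWeight π (Fin.cons a η : Fin (m + 1) → α) = π a * piWeight π η := by
  simp only [piWeight, Fin.prod_univ_succ, Fin.cons_zero, Fin.cons_succ]

lemma piWeight_comp_consEquiv :
    piWeight π ∘ Fin.consEquiv (fun _ => α) = fun z : α × (Fin m → α) => π z.1 * piWeight π z.2 :=
  funext fun z => piWeight_cons z.1 z.2

variable [Fintype α]

lemma sum_piWeight [DecidableEq ι] (hπ : ∑ a, π a = 1) : ∑ ω : ι → α, piWeight π ω = 1 := by
  simp only [piWeight, ← Fintype.prod_sum (fun (_ : ι) a => π a), hπ, prod_const_one]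

lemma IsProbWeight.pi [DecidableEq ι] (hπ : IsProbWeight π) :
    IsProbWeight (piWeight π : (ι → α) → ℝ) where
  nonneg ω := prod_nonneg fun i _ => hπ.nonneg (ω i)
  sum_eq_one := sum_piWeight hπ.sum_eq_one

lemma wmean_piWeight_succ (f : (Fin (m + 1) → α) → ℝ) :
    wmean (piWeight π) f = wmean (piWeight π) fun η => wmean π fun a => f (Fin.cons a η) := by
  rw [← wmean_comp_equiv (Fin.consEquiv fun _ => α), piWeight_comp_consEquiv, wmean_prod]
  rfl

lemma wvar_piWeight_succ (hπ : ∑ a, π a = 1) (f : (Fin (m + 1) → α) → ℝ) :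
    wvar (piWeight π) f =
      wmean (piWeight π) (fun η => wvar π fun a => f (Fin.cons a η)) +
        wvar (piWeight π) (fun η => wmean π fun a => f (Fin.cons a η)) := by
  rw [← wvar_comp_equiv (Fin.consEquiv fun _ => α), piWeight_comp_consEquiv, wvar_prod hπ]
  · rfl
  · exact sum_piWeight hπ

end PiWeight

section Tensorization

variable {α : Type*} [Fintype α] {π : α → ℝ}

lemma wvar_piWeight_zero (hπ : ∑ a, π a = 1) (f : (Fin 0 → α) → ℝ) : wvar (piWeight π) f = 0 := by
  have hf : f = fun _ => f Fin.elim0 := funext fun ω => congrArg f (Subsingleton.elim _ _)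
  rw [hf]
  simp [wvar, wmean_const (sum_piWeight hπ)]

/-- The Efron–Stein inequality for functions of bounded differences. -/
theorem wvar_piWeight_le_of_abs_update_sub_le (hπ : IsProbWeight π) {m : ℕ} (c : Fin m → ℝ)
    (f : (Fin m → α) → ℝ) (hf : ∀ i ω a, |f (update ω i a) - f ω| ≤ c i) :
    wvar (piWeight π) f ≤ ∑ i, c i ^ 2 / 4 := by
  induction m with
  | zero => simp [wvar_piWeight_zero hπ.sum_eq_one]
  | succ m ih =>
    rw [wvar_piWeight_succ hπ.sum_eq_one, Fin.sum_univ_succ]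
    refine add_le_add (wmean_le_of_le hπ.pi fun η => wvar_le_of_abs_sub_le hπ fun a b => ?_)
      (ih _ _ fun i η b => abs_wmean_sub_le hπ fun a => ?_)
    · simpa only [Fin.update_cons_zero] using hf 0 (Fin.cons b η) a
    · simpa only [Fin.cons_update] using hf i.succ (Fin.cons a η) b

lemma wmean_piWeight_sum (hπ : ∑ a, π a = 1) (Z : α → ℝ) {m : ℕ} :
    wmean (piWeight π) (fun ω : Fin m → α => ∑ i, Z (ω i)) = m * wmean π Z := by
  induction m with
  | zero => simp [wmean]
  | succ m ih =>
    simp only [wmean_piWeight_succ, Fin.sum_univ_succ, Fin.cons_zero, Fin.cons_succ,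
      wmean_add_const hπ, add_comm (wmean π Z), wmean_add_const (sum_piWeight hπ), ih]
    push_cast; ring

lemma wvar_piWeight_sum (hπ : ∑ a, π a = 1) (Z : α → ℝ) {m : ℕ} :
    wvar (piWeight π) (fun ω : Fin m → α => ∑ i, Z (ω i)) = m * wvar π Z := by
  induction m with
  | zero => simp [wvar_piWeight_zero hπ]
  | succ m ih =>
    simp only [wvar_piWeight_succ hπ, Fin.sum_univ_succ, Fin.cons_zero, Fin.cons_succ,
      wvar_add_const hπ, wmean_add_const hπ, add_comm (wmean π Z),
      wvar_add_const (sum_piWeight hπ), wmean_const (sum_piWeight hπ), ih]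
    push_cast; ring

end Tensorization

section SampleMean

variable {α : Type*} [Fintype α] {π : α → ℝ}

theorem chebyshev_sampleMean (hπ : IsProbWeight π) (Z : α → ℝ) {k : ℕ} (hk : 0 < k)
    {ε : ℝ} (hε : 0 < ε) :
    1 - wvar π Z / (k * ε ^ 2) ≤
      ∑ ω : Fin k → α,
        if |wmean π Z - (k : ℝ)⁻¹ * ∑ i, Z (ω i)| ≤ ε then piWeight π ω else 0 := by
  have hk' : (k : ℝ) ≠ 0 := by positivity
  have hmean : wmean (piWeight π) (fun ω : Fin k → α => (k : ℝ)⁻¹ * ∑ i, Z (ω i)) = wmean π Z := by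
    rw [wmean_const_mul, wmean_piWeight_sum hπ.sum_eq_one, inv_mul_cancel_left₀ hk']
  have hvar : wvar (piWeight π) (fun ω : Fin k → α => (k : ℝ)⁻¹ * ∑ i, Z (ω i)) =
      wvar π Z / k := by
    rw [wvar_const_mul (sum_piWeight hπ.sum_eq_one), wvar_piWeight_sum hπ.sum_eq_one]
    field_simp
  have := chebyshev_wvar hπ.pi (fun ω : Fin k → α => (k : ℝ)⁻¹ * ∑ i, Z (ω i)) hε
  rwa [hmean, hvar, div_div] at this

end SampleMean

section RandomizedHamming

variable {ι : Type*} [Fintype ι]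

lemma dlToSet_le_dlToSet_add_one (A : Set (ι → Bool)) {l x l' x' : ι → Bool} (j : ι)
    (h : ∀ i, i ≠ j → x i = x' i ∧ l i = l' i) :
    dlToSet l x A ≤ dlToSet l' x' A + 1 := by
  rcases A.eq_empty_or_nonempty with rfl | hA
  · simp [dlToSet]
  classical
  obtain ⟨y, hy, hval⟩ := Nat.sInf_mem (hA.image fun y => dl l' x' y)
  calc dlToSet l x A ≤ dl l x y := Nat.sInf_le ⟨y, hy, rfl⟩
    _ ≤ (insert j ({i | x' i ≠ y i ∧ l' i = true} : Finset ι)).card := by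
        refine card_le_card fun i hi => ?_
        rcases eq_or_ne i j with rfl | hij
        · exact mem_insert_self i _
        · obtain ⟨hx, hl⟩ := h i hij
          simp only [mem_filter, mem_univ, true_and, hx, hl] at hi
          exact mem_insert_of_mem (by simpa using hi)
    _ ≤ dl l' x' y + 1 := card_insert_le _ _
    _ = dlToSet l' x' A + 1 := congrArg (· + 1) hval

lemma abs_dlToSet_sub_le_one (A : Set (ι → Bool)) {l x l' x' : ι → Bool} (j : ι)
    (h : ∀ i, i ≠ j → x i = x' i ∧ l i = l' i) :
    |(dlToSet l x A : ℝ) - dlToSet l' x' A| ≤ 1 := by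
  have h₁ := dlToSet_le_dlToSet_add_one A j h
  have h₂ := dlToSet_le_dlToSet_add_one A j fun i hi => (h i hi).imp Eq.symm Eq.symm
  rw [abs_sub_le_iff, sub_le_iff_le_add', sub_le_iff_le_add']
  exact ⟨by exact_mod_cast h₁, by exact_mod_cast h₂⟩

end RandomizedHamming

section Sampling

variable (p : ℝ) {n : ℕ}

lemma bernWeight_eq_prod {ι : Type*} [Fintype ι] (l : ι → Bool) :
    bernWeight p l = ∏ i, if l i then p else 1 - p := by
  rw [prod_ite, prod_const, prod_const, bernWeight]
  simp only [Bool.not_eq_true]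

/-- The law of one coordinate pair `(x i, l i)`: a fair bit and an independent Bernoulli(p) bit. -/
noncomputable def pairWeight (b : Bool × Bool) : ℝ := (if b.2 then p else 1 - p) / 2

lemma isProbWeight_pairWeight (hp0 : 0 ≤ p) (hp1 : p ≤ 1) : IsProbWeight (pairWeight p) where
  nonneg b := by unfold pairWeight; split_ifs <;> linarith
  sum_eq_one := by simp [pairWeight, Fintype.sum_prod_type]; ring

lemma piWeight_pairWeight (ω : Fin n → Bool × Bool) :
    piWeight (pairWeight p) ω = bernWeight p (fun i => (ω i).2) / 2 ^ n := by
  simp only [piWeight, pairWeight, prod_div_distrib, bernWeight_eq_prod, prod_const, card_univ,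
    Fintype.card_fin]

lemma piWeight_pairWeight_comp_symm :
    piWeight (pairWeight p) ∘ (Equiv.arrowProdEquivProdArrow (Fin n) _ _).symm =
      fun z : (Fin n → Bool) × (Fin n → Bool) => bernWeight p z.2 / 2 ^ n :=
  funext fun _ => piWeight_pairWeight p _

lemma isProbWeight_bernWeight_div (hp0 : 0 ≤ p) (hp1 : p ≤ 1) :
    IsProbWeight fun z : (Fin n → Bool) × (Fin n → Bool) => bernWeight p z.2 / 2 ^ n :=
  piWeight_pairWeight_comp_symm p ▸ ((isProbWeight_pairWeight p hp0 hp1).pi.comp_equiv _)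

lemma wmean_dlToSet (A : Set (Fin n → Bool)) :
    wmean (fun z : (Fin n → Bool) × (Fin n → Bool) => bernWeight p z.2 / 2 ^ n)
      (fun z => (dlToSet z.2 z.1 A : ℝ)) = avgDistP p A := by
  rw [wmean, Fintype.sum_prod_type, sum_comm, avgDistP, Fintype.card_fin]

lemma wvar_dlToSet_le (hp0 : 0 ≤ p) (hp1 : p ≤ 1) (A : Set (Fin n → Bool)) :
    wvar (fun z : (Fin n → Bool) × (Fin n → Bool) => bernWeight p z.2 / 2 ^ n)
      (fun z => (dlToSet z.2 z.1 A : ℝ)) ≤ n / 4 := by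
  rw [← piWeight_pairWeight_comp_symm, ← wvar_comp_equiv (Equiv.arrowProdEquivProdArrow _ _ _),
    Function.comp_assoc, Equiv.symm_comp_self, Function.comp_id]
  refine (wvar_piWeight_le_of_abs_update_sub_le (isProbWeight_pairWeight p hp0 hp1) 1 _
    fun j ω a => ?_).trans (by simp [div_eq_mul_inv])
  exact abs_dlToSet_sub_le_one A j fun i hi => by simp [update_of_ne hi]

end Sampling

open Classical in
theorem stmt6_general (p : ℝ) (hp0 : 0 < p) (hp1 : p ≤ 1) {n : ℕ} (hn : 1 ≤ n)
    (A : Set (Fin n → Bool))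
    (ε : ℝ) (hε : 0 < ε) (k : ℕ) (hk : k = ⌈(64 * n : ℝ) / ε ^ 2⌉₊) :
    (0.9 : ℝ) ≤
      ∑ ω : Fin k → (Fin n → Bool) × (Fin n → Bool),
        if |avgDistP p A - (k : ℝ)⁻¹ * ∑ i : Fin k, (dlToSet (ω i).2 (ω i).1 A : ℝ)| ≤ ε then
          ∏ i : Fin k, bernWeight p (ω i).2 / 2 ^ n
        else 0 := by
  have hkε : 64 * n ≤ k * ε ^ 2 := by
    rw [← div_le_iff₀ (by positivity), hk]
    exact Nat.le_ceil _
  have hk0 : 0 < k := by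
    have : (0 : ℝ) < k * ε ^ 2 := by
      have : (1 : ℝ) ≤ n := by exact_mod_cast hn
      linarith
    exact_mod_cast pos_of_mul_pos_left this (by positivity)
  have hconc := chebyshev_sampleMean (isProbWeight_bernWeight_div p hp0.le hp1)
    (fun z => (dlToSet z.2 z.1 A : ℝ)) hk0 hε
  rw [wmean_dlToSet] at hconc
  refine le_trans ?_ hconc
  have hvar := wvar_dlToSet_le p hp0.le hp1 A
  rw [le_sub_comm, div_le_iff₀ (by positivity)]
  linarith

open Classical in
/-- Theorem 4.4: sampling `k = ⌈64n/ε²⌉` independent pairs `(x_i, l_i)` where `x_i` is uniform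
on `C_n` and `l_i` has independent Bernoulli(p) coordinates, with probability at least `0.9`
the average of `d_{l_i}(x_i, A)` is within `ε` of `Δ(A,p)`. The probability of the event is
written as the sum, over all tuples `ω` of pairs in the event, of the probability
`∏ i, bernWeight p (l_i) / 2^n` of the tuple. -/
theorem stmt6 (p : ℝ) (hp0 : 0 < p) (hp1 : p ≤ 1) {n : ℕ} (hn : 1 ≤ n)
    (A : Set (Fin n → Bool)) (hA : A.Nonempty)
    (ε : ℝ) (hε : 0 < ε) (k : ℕ) (hk : k = ⌈(64 * n : ℝ) / ε ^ 2⌉₊) :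
    (0.9 : ℝ) ≤
      ∑ ω : Fin k → (Fin n → Bool) × (Fin n → Bool),
        if |avgDistP p A - (k : ℝ)⁻¹ * ∑ i : Fin k, (dlToSet (ω i).2 (ω i).1 A : ℝ)| ≤ ε then
          ∏ i : Fin k, bernWeight p (ω i).2 / 2 ^ n
        else 0 :=
  stmt6_general p hp0 hp1 hn A ε hε k hk
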